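/- Let n₁, n₂ be positive integers and let f be a C² holomorphic function on 𝒰 = ℝ₊² × ℋ_{n₁} × ℋ_{n₂}, i.e. ∂f/∂w̄_α := (1/2)(∂f/∂s_α + i ∂f/∂t_α) = 0 and Z̄_{αj} f := ∂f/∂z̄_{αj} − i z_{αj} ∂f/∂s_α = 0 for all j = 1,…,n_α and α = 1,2. Then for every p > 0 and every (t₁,t₂,g₁,g₂) ∈ 𝒰 with f(t₁,t₂,g₁,g₂) ≠ 0, one has ℒ_α |f|^p(t₁,t₂,g₁,g₂) ≥ 0 for each α = 1,2, where ℒ_α = (1/(4 n_α)) ∑_{j=1}^{2 n_α} X_{αj}² − ∂/∂t_α is the heat operator acting in the variables (t_α, g_α). -/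

import Mathlib

noncomputable section

/-- A point of the Heisenberg group ℋ_n : `(s, z) ∈ ℝ × ℂⁿ`. -/
abbrev Heis (n : ℕ) := ℝ × (Fin n → ℂ)

/-- The flat-model ambient space `(t₁, t₂, g₁, g₂)`. -/
abbrev FlatPt (n₁ n₂ : ℕ) := ℝ × ℝ × Heis n₁ × Heis n₂

/-- The left-invariant vector field `X_j = ∂/∂x_j + 2 x_{n+j} ∂/∂s` (real-valued). -/
def XR {n : ℕ} (j : Fin n) (v : Heis n → ℝ) (g : Heis n) : ℝ :=
  fderiv ℝ v g (2 * (g.2 j).im, Pi.single j 1)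

/-- The left-invariant vector field `X_{n+j} = ∂/∂x_{n+j} − 2 x_j ∂/∂s` (real-valued). -/
def YR {n : ℕ} (j : Fin n) (v : Heis n → ℝ) (g : Heis n) : ℝ :=
  fderiv ℝ v g (-2 * (g.2 j).re, Pi.single j Complex.I)

/-- The heat operator `ℒ₁ = (1/(4n₁)) ∑_{j=1}^{2n₁} X_{1j}² − ∂/∂t₁` acting
in the variables `(t₁, g₁)` on real-valued functions on the flat model. -/
def heatOpR₁ (n₁ n₂ : ℕ) (v : FlatPt n₁ n₂ → ℝ) (p : FlatPt n₁ n₂) : ℝ :=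
  (1 / (4 * (n₁ : ℝ))) *
      ∑ j : Fin n₁, (XR j (XR j (fun g => v (p.1, p.2.1, g, p.2.2.2))) p.2.2.1
        + YR j (YR j (fun g => v (p.1, p.2.1, g, p.2.2.2))) p.2.2.1)
    - fderiv ℝ v p (1, 0, 0, 0)

/-- The heat operator `ℒ₂ = (1/(4n₂)) ∑_{j=1}^{2n₂} X_{2j}² − ∂/∂t₂` acting
in the variables `(t₂, g₂)`. -/
def heatOpR₂ (n₁ n₂ : ℕ) (v : FlatPt n₁ n₂ → ℝ) (p : FlatPt n₁ n₂) : ℝ :=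
  (1 / (4 * (n₂ : ℝ))) *
      ∑ j : Fin n₂, (XR j (XR j (fun g => v (p.1, p.2.1, p.2.2.1, g))) p.2.2.2
        + YR j (YR j (fun g => v (p.1, p.2.1, p.2.2.1, g))) p.2.2.2)
    - fderiv ℝ v p (0, 1, 0, 0)

/-- The holomorphy equations on the flat model. -/
def IsFlatHolomorphicAt (n₁ n₂ : ℕ) (f : FlatPt n₁ n₂ → ℂ) (p : FlatPt n₁ n₂) : Prop :=
  (1/2 : ℂ) * (fderiv ℝ f p (0, 0, (1, 0), 0) + Complex.I * fderiv ℝ f p (1, 0, 0, 0)) = 0 ∧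
  (1/2 : ℂ) * (fderiv ℝ f p (0, 0, 0, (1, 0)) + Complex.I * fderiv ℝ f p (0, 1, 0, 0)) = 0 ∧
  (∀ j : Fin n₁,
    (1/2 : ℂ) * (fderiv ℝ f p (0, 0, (0, Pi.single j 1), 0)
        + Complex.I * fderiv ℝ f p (0, 0, (0, Pi.single j Complex.I), 0))
      - Complex.I * p.2.2.1.2 j * fderiv ℝ f p (0, 0, (1, 0), 0) = 0) ∧
  (∀ j : Fin n₂,
    (1/2 : ℂ) * (fderiv ℝ f p (0, 0, 0, (0, Pi.single j 1))
        + Complex.I * fderiv ℝ f p (0, 0, 0, (0, Pi.single j Complex.I)))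
      - Complex.I * p.2.2.2.2 j * fderiv ℝ f p (0, 0, 0, (1, 0)) = 0)

/-! The holomorphy equations say `Z̄_j f = (X_j f + i X_{n+j} f) / 2 = 0` and
`∂_t f = i ∂_s f`. Differentiating the first along `X_j` and `X_{n+j}` and using
`[X_j, X_{n+j}] = -4 ∂_s` gives `(X_j² + X_{n+j}²) f = 4 i ∂_s f`. Expanding
`|f|^p = (|f|²)^(p/2)` twice by the chain rule, the `∂_s f` terms of `∑_j (X_j² + X_{n+j}²) |f|^p`
cancel exactly against `4 n ∂_t |f|^p`, so that
`ℒ |f|^p = p² / (4 n) · |f|^(p-2) · ∑_j |X_j f|² ≥ 0`. -/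

open Complex Topology VectorField

section DirDeriv

variable {E F H : Type*} [NormedAddCommGroup E] [NormedSpace ℝ E]
  [NormedAddCommGroup F] [NormedSpace ℝ F] [NormedAddCommGroup H] [NormedSpace ℝ H]

def dirDeriv (V : E → E) (u : E → F) (x : E) : F := fderiv ℝ u x (V x)

lemma ContDiffAt.differentiableAt_dirDeriv {u : E → F} {V : E → E} {x : E}
    (hu : ContDiffAt ℝ 2 u x) (hV : DifferentiableAt ℝ V x) :
    DifferentiableAt ℝ (dirDeriv V u) x :=
  ((hu.fderiv_right (m := 1) le_rfl).differentiableAt one_ne_zero).clm_apply hV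

lemma dirDeriv_comp {u : E → F} {ξ : H → H} {Ξ : E → E} {e : H → E} {ι : H →L[ℝ] E} {g : H}
    (hu : DifferentiableAt ℝ u (e g)) (he : HasFDerivAt e ι g) (hΞ : Ξ (e g) = ι (ξ g)) :
    dirDeriv ξ (u ∘ e) g = dirDeriv Ξ u (e g) := by
  simp only [dirDeriv, fderiv_comp g hu he.differentiableAt, he.fderiv,
    ContinuousLinearMap.comp_apply, hΞ]

lemma dirDeriv_dirDeriv_comp {u : E → F} {ξ : H → H} {Ξ : E → E} {e : H → E} {ι : H →L[ℝ] E}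
    {g : H} (hu : ContDiffAt ℝ 2 u (e g)) (hΞd : DifferentiableAt ℝ Ξ (e g))
    (he : ∀ g, HasFDerivAt e ι g) (hΞ : ∀ g, Ξ (e g) = ι (ξ g)) :
    dirDeriv ξ (dirDeriv ξ (u ∘ e)) g = dirDeriv Ξ (dirDeriv Ξ u) (e g) := by
  have hnear : dirDeriv ξ (u ∘ e) =ᶠ[𝓝 g] dirDeriv Ξ u ∘ e := by
    filter_upwards [(he g).continuousAt.eventually (hu.eventually (by simp))] with g' hg'
    exact dirDeriv_comp (hg'.differentiableAt two_ne_zero) (he g') (hΞ g')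
  rw [dirDeriv, hnear.fderiv_eq]
  exact dirDeriv_comp (hu.differentiableAt_dirDeriv hΞd) (he g) (hΞ g)

-- Differentiating `V f + i W f = 0` along `V` and `W` leaves `V² f + W² f` as a commutator.
lemma dirDeriv_dirDeriv_add_dirDeriv_dirDeriv_of_eventually {f : E → ℂ} {V W : E → E} {x : E}
    (hf : ContDiffAt ℝ 2 f x) (hV : DifferentiableAt ℝ V x) (hW : DifferentiableAt ℝ W x)
    (hCR : ∀ᶠ y in 𝓝 x, dirDeriv V f y + I * dirDeriv W f y = 0) :
    dirDeriv V (dirDeriv V f) x + dirDeriv W (dirDeriv W f) x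
      = -I * fderiv ℝ f x (lieBracket ℝ V W x) := by
  have hsum : HasFDerivAt (fun y => dirDeriv V f y + I * dirDeriv W f y)
      (fderiv ℝ (dirDeriv V f) x + I • fderiv ℝ (dirDeriv W f) x) x :=
    (hf.differentiableAt_dirDeriv hV).hasFDerivAt.add
      ((hf.differentiableAt_dirDeriv hW).hasFDerivAt.const_mul I)
  have hCR' : (fun y => dirDeriv V f y + I * dirDeriv W f y) =ᶠ[𝓝 x] fun _ => 0 := hCR
  have hzero := hsum.fderiv.symm.trans (hCR'.fderiv_eq.trans (fderiv_const_apply 0))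
  have hV0 : dirDeriv V (dirDeriv V f) x + I * dirDeriv V (dirDeriv W f) x = 0 := by
    simpa [dirDeriv] using congrArg (fun L : E →L[ℝ] ℂ => L (V x)) hzero
  have hW0 : dirDeriv W (dirDeriv V f) x + I * dirDeriv W (dirDeriv W f) x = 0 := by
    simpa [dirDeriv] using congrArg (fun L : E →L[ℝ] ℂ => L (W x)) hzero
  have hbr : fderiv ℝ f x (lieBracket ℝ V W x)
      = dirDeriv V (dirDeriv W f) x - dirDeriv W (dirDeriv V f) x :=
    fderiv_apply_lieBracket hf (by simp [minSmoothness_of_isRCLikeNormedField]) hW hV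
  rw [hbr]
  linear_combination hV0 - I * hW0 + dirDeriv W (dirDeriv W f) x * I_sq

end DirDeriv

section NormRpow

open scoped InnerProductSpace

variable {E F : Type*} [NormedAddCommGroup E] [NormedSpace ℝ E]
  [NormedAddCommGroup F] [InnerProductSpace ℝ F] {f : E → F} {x : E}

lemma HasFDerivAt.norm_rpow {f' : E →L[ℝ] F} (hf : HasFDerivAt f f' x) (hx : f x ≠ 0) (p : ℝ) :
    HasFDerivAt (fun y => ‖f y‖ ^ p) ((p * ‖f x‖ ^ (p - 2)) • (innerSL ℝ (f x)).comp f') x := by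
  have hsq : ∀ (q : ℝ) y, ‖f y‖ ^ q = (‖f y‖ ^ 2) ^ (q / 2) := fun q y => by
    rw [← Real.rpow_natCast_mul (norm_nonneg _)]; ring_nf
  simp only [hsq p]
  convert hf.norm_sq.rpow_const (p := p / 2) (Or.inl (by positivity)) using 1
  ext v
  simp only [smul_apply, ContinuousLinearMap.comp_apply, innerSL_apply_apply, smul_eq_mul,
    nsmul_eq_mul]
  rw [show p / 2 - 1 = (p - 2) / 2 by ring, ← hsq]
  ring

lemma dirDeriv_norm_rpow (hf : DifferentiableAt ℝ f x) (hx : f x ≠ 0) (V : E → E) (p : ℝ) :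
    dirDeriv V (fun y => ‖f y‖ ^ p) x = p * ‖f x‖ ^ (p - 2) * ⟪f x, dirDeriv V f x⟫_ℝ := by
  simp [dirDeriv, (hf.hasFDerivAt.norm_rpow hx p).fderiv]

lemma dirDeriv_dirDeriv_norm_rpow {V : E → E} (hf : ContDiffAt ℝ 2 f x)
    (hV : DifferentiableAt ℝ V x) (hx : f x ≠ 0) (p : ℝ) :
    dirDeriv V (dirDeriv V (fun y => ‖f y‖ ^ p)) x
      = p * (p - 2) * ‖f x‖ ^ (p - 4) * ⟪f x, dirDeriv V f x⟫_ℝ ^ 2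
        + p * ‖f x‖ ^ (p - 2) * (‖dirDeriv V f x‖ ^ 2 + ⟪f x, dirDeriv V (dirDeriv V f) x⟫_ℝ) := by
  have hnear : dirDeriv V (fun y => ‖f y‖ ^ p)
      =ᶠ[𝓝 x] fun y => p * ‖f y‖ ^ (p - 2) * ⟪f y, dirDeriv V f y⟫_ℝ := by
    filter_upwards [hf.eventually (by simp), hf.continuousAt.eventually_ne hx] with y hy hy0
    exact dirDeriv_norm_rpow (hy.differentiableAt two_ne_zero) hy0 V p
  have hF := (hf.differentiableAt two_ne_zero).hasFDerivAt
  have hD : HasFDerivAt (fun y => p * ‖f y‖ ^ (p - 2) * ⟪f y, dirDeriv V f y⟫_ℝ) _ x :=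
    ((hF.norm_rpow hx (p - 2)).const_mul p).mul
      (hF.inner ℝ (hf.differentiableAt_dirDeriv hV).hasFDerivAt)
  rw [dirDeriv, hnear.fderiv_eq, hD.fderiv]
  simp only [dirDeriv, add_apply, smul_apply, ContinuousLinearMap.comp_apply,
    ContinuousLinearMap.prod_apply, fderivInnerCLM_apply, inner_self_eq_norm_sq_to_K,
    Real.ringHom_apply, smul_eq_mul, coe_innerSL_apply]
  ring_nf

end NormRpow

section HolomorphicPair

open scoped InnerProductSpace

variable {E : Type*} [NormedAddCommGroup E] [NormedSpace ℝ E] {f : E → ℂ} {x : E}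

lemma Complex.real_inner_sq_add_real_inner_I_mul_sq (z a : ℂ) :
    ⟪z, a⟫_ℝ ^ 2 + ⟪z, I * a⟫_ℝ ^ 2 = ‖z‖ ^ 2 * ‖a‖ ^ 2 := by
  simp only [Complex.inner, Complex.sq_norm, normSq_apply, mul_re, mul_im, conj_re, conj_im,
    I_re, I_im]
  ring

lemma dirDeriv_sq_add_dirDeriv_sq_norm_rpow {V W : E → E} (hf : ContDiffAt ℝ 2 f x)
    (hV : DifferentiableAt ℝ V x) (hW : DifferentiableAt ℝ W x) (hx : f x ≠ 0)
    (hWV : dirDeriv W f x = I * dirDeriv V f x) (p : ℝ) :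
    dirDeriv V (dirDeriv V (fun y => ‖f y‖ ^ p)) x + dirDeriv W (dirDeriv W (fun y => ‖f y‖ ^ p)) x
      = p ^ 2 * ‖f x‖ ^ (p - 2) * ‖dirDeriv V f x‖ ^ 2
        + p * ‖f x‖ ^ (p - 2)
          * ⟪f x, dirDeriv V (dirDeriv V f) x + dirDeriv W (dirDeriv W f) x⟫_ℝ := by
  rw [dirDeriv_dirDeriv_norm_rpow hf hV hx, dirDeriv_dirDeriv_norm_rpow hf hW hx, hWV,
    inner_add_right, norm_mul, norm_I, one_mul]
  have hpow : ‖f x‖ ^ (p - 4) * ‖f x‖ ^ 2 = ‖f x‖ ^ (p - 2) := by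
    rw [← Real.rpow_natCast, ← Real.rpow_add (norm_pos_iff.mpr hx)]
    ring_nf
  linear_combination (p * (p - 2) * ‖f x‖ ^ (p - 4))
      * Complex.real_inner_sq_add_real_inner_I_mul_sq (f x) (dirDeriv V f x)
    + (p * (p - 2) * ‖dirDeriv V f x‖ ^ 2) * hpow

theorem heat_norm_rpow_eq {n : ℕ} (hn : n ≠ 0) {X Y : Fin n → E → E} {S T : E}
    (hf : ContDiffAt ℝ 2 f x) (hx : f x ≠ 0)
    (hX : ∀ j, DifferentiableAt ℝ (X j) x) (hY : ∀ j, DifferentiableAt ℝ (Y j) x)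
    (hCR : ∀ᶠ y in 𝓝 x, ∀ j, dirDeriv (X j) f y + I * dirDeriv (Y j) f y = 0)
    (hbr : ∀ j, lieBracket ℝ (X j) (Y j) x = (-4 : ℝ) • S)
    (hT : fderiv ℝ f x T = I * fderiv ℝ f x S) (p : ℝ) :
    1 / (4 * n) * ∑ j, (dirDeriv (X j) (dirDeriv (X j) (fun y => ‖f y‖ ^ p)) x
        + dirDeriv (Y j) (dirDeriv (Y j) (fun y => ‖f y‖ ^ p)) x)
      - fderiv ℝ (fun y => ‖f y‖ ^ p) x T
      = p ^ 2 / (4 * n) * ‖f x‖ ^ (p - 2) * ∑ j, ‖dirDeriv (X j) f x‖ ^ 2 := by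
  have hYX : ∀ j, dirDeriv (Y j) f x = I * dirDeriv (X j) f x := fun j => by
    linear_combination (-I) * hCR.self_of_nhds j + dirDeriv (Y j) f x * I_sq
  have hsq : ∀ j, dirDeriv (X j) (dirDeriv (X j) f) x + dirDeriv (Y j) (dirDeriv (Y j) f) x
      = (4 : ℝ) • (I * fderiv ℝ f x S) := fun j => by
    rw [dirDeriv_dirDeriv_add_dirDeriv_dirDeriv_of_eventually hf (hX j) (hY j)
      (hCR.mono fun y hy => hy j), hbr j, map_smul, real_smul, real_smul]
    push_cast
    ring
  simp only [dirDeriv_sq_add_dirDeriv_sq_norm_rpow hf (hX _) (hY _) hx (hYX _), hsq,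
    real_inner_smul_right, ((hf.differentiableAt two_ne_zero).hasFDerivAt.norm_rpow hx p).fderiv,
    smul_apply, ContinuousLinearMap.comp_apply, innerSL_apply_apply, smul_eq_mul, hT,
    Finset.sum_add_distrib, Finset.sum_const, Finset.card_univ, Fintype.card_fin, nsmul_eq_mul,
    ← Finset.mul_sum]
  field_simp
  ring

end HolomorphicPair

section HeisenbergFactor

variable {E : Type*} [NormedAddCommGroup E] [NormedSpace ℝ E] {n : ℕ}

-- The left-invariant fields `X_j` and `X_{n+j}`: `XR j = dirDeriv (heisX j)` and
-- `YR j = dirDeriv (heisY j)` hold by definition.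
def heisX (j : Fin n) (g : Heis n) : Heis n := (2 * (g.2 j).im, Pi.single j 1)

def heisY (j : Fin n) (g : Heis n) : Heis n := (-2 * (g.2 j).re, Pi.single j I)

lemma hasFDerivAt_heisX (j : Fin n) (g : Heis n) :
    HasFDerivAt (heisX j) (((2 : ℝ) • imCLM.comp ((ContinuousLinearMap.proj j).comp
      (ContinuousLinearMap.snd ℝ ℝ (Fin n → ℂ)))).prod 0) g :=
  (((2 : ℝ) • imCLM.comp ((ContinuousLinearMap.proj j).comp
    (ContinuousLinearMap.snd ℝ ℝ (Fin n → ℂ)))).hasFDerivAt).prodMk (hasFDerivAt_const _ _)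

lemma hasFDerivAt_heisY (j : Fin n) (g : Heis n) :
    HasFDerivAt (heisY j) (((-2 : ℝ) • reCLM.comp ((ContinuousLinearMap.proj j).comp
      (ContinuousLinearMap.snd ℝ ℝ (Fin n → ℂ)))).prod 0) g :=
  (((-2 : ℝ) • reCLM.comp ((ContinuousLinearMap.proj j).comp
    (ContinuousLinearMap.snd ℝ ℝ (Fin n → ℂ)))).hasFDerivAt).prodMk (hasFDerivAt_const _ _)

variable (ι : Heis n →L[ℝ] E) (π : E →L[ℝ] Heis n)

lemma lieBracket_heisX_heisY (hπι : ∀ g, π (ι g) = g) (j : Fin n) (x : E) :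
    lieBracket ℝ (fun y => ι (heisX j (π y))) (fun y => ι (heisY j (π y))) x
      = (-4 : ℝ) • ι (1, 0) := by
  have hX := (ι.hasFDerivAt.comp x ((hasFDerivAt_heisX j (π x)).comp x π.hasFDerivAt)).fderiv
  have hY := (ι.hasFDerivAt.comp x ((hasFDerivAt_heisY j (π x)).comp x π.hasFDerivAt)).fderiv
  simp only [Function.comp_def] at hX hY
  rw [lieBracket, hX, hY]
  norm_num [hπι, heisX, heisY, ← map_sub, ← map_smul]

lemma dirDeriv_heisX_add_I_mul_dirDeriv_heisY (u : E → ℂ) (j : Fin n) (y : E) :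
    dirDeriv (fun x => ι (heisX j (π x))) u y + I * dirDeriv (fun x => ι (heisY j (π x))) u y
      = 2 * ((1 / 2 : ℂ) * (fderiv ℝ u y (ι (0, Pi.single j 1))
          + I * fderiv ℝ u y (ι (0, Pi.single j I)))
        - I * (π y).2 j * fderiv ℝ u y (ι (1, 0))) := by
  have hX : heisX j (π y) = (2 * ((π y).2 j).im) • ((1 : ℝ), (0 : Fin n → ℂ))
      + (0, Pi.single j 1) := by ext <;> simp [heisX]
  have hY : heisY j (π y) = (-2 * ((π y).2 j).re) • ((1 : ℝ), (0 : Fin n → ℂ))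
      + (0, Pi.single j I) := by ext <;> simp [heisY]
  simp only [dirDeriv, hX, hY, map_add, map_smul, real_smul]
  push_cast
  linear_combination (fderiv ℝ u y (ι (1, 0))) * (2 * I) * (re_add_im ((π y).2 j)).symm
    + 2 * ((π y).2 j).im * fderiv ℝ u y (ι (1, 0)) * I_sq

end HeisenbergFactor

-- `ι` and `π` embed and project a Heisenberg factor of `E`, `e` is the affine slice of that
-- factor through `e g₀`, and `T` is the time direction paired with its centre.
theorem heisenberg_heat_norm_rpow_nonneg {E : Type*} [NormedAddCommGroup E] [NormedSpace ℝ E]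
    {n : ℕ} (hn : 0 < n) (ι : Heis n →L[ℝ] E) (π : E →L[ℝ] Heis n) (hπι : ∀ g, π (ι g) = g)
    {e : Heis n → E} (he : ∀ g, HasFDerivAt e ι g) (hπe : ∀ g, π (e g) = g)
    {g₀ : Heis n} {T : E} {f : E → ℂ} (hf : ContDiffAt ℝ 2 f (e g₀)) (hf₀ : f (e g₀) ≠ 0)
    (hZ : ∀ᶠ y in 𝓝 (e g₀), ∀ j : Fin n,
      (1 / 2 : ℂ) * (fderiv ℝ f y (ι (0, Pi.single j 1)) + I * fderiv ℝ f y (ι (0, Pi.single j I)))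
        - I * (π y).2 j * fderiv ℝ f y (ι (1, 0)) = 0)
    (hw : (1 / 2 : ℂ) * (fderiv ℝ f (e g₀) (ι (1, 0)) + I * fderiv ℝ f (e g₀) T) = 0) (p : ℝ) :
    0 ≤ 1 / (4 * (n : ℝ)) * ∑ j : Fin n, (XR j (XR j (fun g => ‖f (e g)‖ ^ p)) g₀
        + YR j (YR j (fun g => ‖f (e g)‖ ^ p)) g₀)
      - fderiv ℝ (fun y => ‖f y‖ ^ p) (e g₀) T := by
  have hu : ContDiffAt ℝ 2 (fun y => ‖f y‖ ^ p) (e g₀) :=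
    (hf.norm ℝ hf₀).rpow_const_of_ne (norm_ne_zero_iff.mpr hf₀)
  have hX : ∀ j, HasFDerivAt (fun y => ι (heisX j (π y))) _ (e g₀) := fun j =>
    ι.hasFDerivAt.comp _ ((hasFDerivAt_heisX j _).comp _ π.hasFDerivAt)
  have hY : ∀ j, HasFDerivAt (fun y => ι (heisY j (π y))) _ (e g₀) := fun j =>
    ι.hasFDerivAt.comp _ ((hasFDerivAt_heisY j _).comp _ π.hasFDerivAt)
  have hCR : ∀ᶠ y in 𝓝 (e g₀), ∀ j : Fin n, dirDeriv (fun x => ι (heisX j (π x))) f y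
      + I * dirDeriv (fun x => ι (heisY j (π x))) f y = 0 :=
    hZ.mono fun y hy j => by rw [dirDeriv_heisX_add_I_mul_dirDeriv_heisY, hy j, mul_zero]
  have hT : fderiv ℝ f (e g₀) T = I * fderiv ℝ f (e g₀) (ι (1, 0)) := by
    linear_combination (-2 * I) * hw + fderiv ℝ f (e g₀) T * I_sq
  have hXR : ∀ j, XR j (XR j (fun g => ‖f (e g)‖ ^ p)) g₀
      = dirDeriv (fun y => ι (heisX j (π y))) (dirDeriv (fun y => ι (heisX j (π y)))
          (fun y => ‖f y‖ ^ p)) (e g₀) := fun j =>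
    dirDeriv_dirDeriv_comp hu (hX j).differentiableAt he (fun g => by rw [hπe]; rfl)
  have hYR : ∀ j, YR j (YR j (fun g => ‖f (e g)‖ ^ p)) g₀
      = dirDeriv (fun y => ι (heisY j (π y))) (dirDeriv (fun y => ι (heisY j (π y)))
          (fun y => ‖f y‖ ^ p)) (e g₀) := fun j =>
    dirDeriv_dirDeriv_comp hu (hY j).differentiableAt he (fun g => by rw [hπe]; rfl)
  simp only [hXR, hYR]
  rw [heat_norm_rpow_eq hn.ne' hf hf₀ (fun j => (hX j).differentiableAt)
    (fun j => (hY j).differentiableAt) hCR (lieBracket_heisX_heisY ι π hπι · _) hT]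
  positivity

theorem heatOp_abs_rpow_nonneg_biparameter_general (n₁ n₂ : ℕ) (hn₁ : 0 < n₁) (hn₂ : 0 < n₂)
    (f : FlatPt n₁ n₂ → ℂ)
    (hf : ContDiffOn ℝ 2 f {q : FlatPt n₁ n₂ | 0 < q.1 ∧ 0 < q.2.1})
    (hholo : ∀ q : FlatPt n₁ n₂, 0 < q.1 → 0 < q.2.1 → IsFlatHolomorphicAt n₁ n₂ f q)
    (p : ℝ) :
    ∀ q : FlatPt n₁ n₂, 0 < q.1 → 0 < q.2.1 → f q ≠ 0 →
      0 ≤ heatOpR₁ n₁ n₂ (fun x => ‖f x‖ ^ p) q ∧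
      0 ≤ heatOpR₂ n₁ n₂ (fun x => ‖f x‖ ^ p) q := by
  intro q hq₁ hq₂ hfq
  have hU : {x : FlatPt n₁ n₂ | 0 < x.1 ∧ 0 < x.2.1} ∈ 𝓝 q :=
    ((isOpen_lt continuous_const continuous_fst).inter
      (isOpen_lt continuous_const (continuous_fst.comp continuous_snd))).mem_nhds ⟨hq₁, hq₂⟩
  have hholo' : ∀ᶠ y in 𝓝 q, IsFlatHolomorphicAt n₁ n₂ f y :=
    Filter.eventually_of_mem hU fun y hy => hholo y hy.1 hy.2
  constructor
  · exact heisenberg_heat_norm_rpow_nonneg hn₁ _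
      ((ContinuousLinearMap.fst ℝ _ _).comp ((ContinuousLinearMap.snd ℝ _ _).comp
        (ContinuousLinearMap.snd ℝ _ _))) (fun _ => rfl) (e := fun g => (q.1, q.2.1, g, q.2.2.2))
      (fun _ => (hasFDerivAt_const _ _).prodMk ((hasFDerivAt_const _ _).prodMk
        ((hasFDerivAt_id _).prodMk (hasFDerivAt_const _ _))))
      (fun _ => rfl) (hf.contDiffAt hU) hfq (hholo'.mono fun y hy j => by simpa using hy.2.2.1 j)
      (by simpa using hholo'.self_of_nhds.1) p
  · exact heisenberg_heat_norm_rpow_nonneg hn₂ _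
      ((ContinuousLinearMap.snd ℝ _ _).comp ((ContinuousLinearMap.snd ℝ _ _).comp
        (ContinuousLinearMap.snd ℝ _ _))) (fun _ => rfl) (e := fun g => (q.1, q.2.1, q.2.2.1, g))
      (fun _ => (hasFDerivAt_const _ _).prodMk ((hasFDerivAt_const _ _).prodMk
        ((hasFDerivAt_const _ _).prodMk (hasFDerivAt_id _))))
      (fun _ => rfl) (hf.contDiffAt hU) hfq (hholo'.mono fun y hy j => by simpa using hy.2.2.2 j)
      (by simpa using hholo'.self_of_nhds.2.1) p

/-- Parabolic subharmonicity on the product flat model: if `f` is C² and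
holomorphic on `𝒰 = ℝ₊² × ℋ_{n₁} × ℋ_{n₂}`, then `ℒ_α |f|^p ≥ 0` at every
point where `f ≠ 0`, for every `p > 0` and `α = 1, 2`. -/
theorem heatOp_abs_rpow_nonneg_biparameter (n₁ n₂ : ℕ) (hn₁ : 0 < n₁) (hn₂ : 0 < n₂)
    (f : FlatPt n₁ n₂ → ℂ)
    (hf : ContDiffOn ℝ 2 f {q : FlatPt n₁ n₂ | 0 < q.1 ∧ 0 < q.2.1})
    (hholo : ∀ q : FlatPt n₁ n₂, 0 < q.1 → 0 < q.2.1 → IsFlatHolomorphicAt n₁ n₂ f q)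
    (p : ℝ) (hp : 0 < p) :
    ∀ q : FlatPt n₁ n₂, 0 < q.1 → 0 < q.2.1 → f q ≠ 0 →
      0 ≤ heatOpR₁ n₁ n₂ (fun x => ‖f x‖ ^ p) q ∧
      0 ≤ heatOpR₂ n₁ n₂ (fun x => ‖f x‖ ^ p) q :=
  heatOp_abs_rpow_nonneg_biparameter_general n₁ n₂ hn₁ hn₂ f hf hholo p
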